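/- arXiv:1501.04902 — 2 statements merged into one kernel-verified Lean document; each statement's English description precedes it below -/
import Mathlib

section
/- For the pure state Ω(γ) = |Ω(γ)⟩⟨Ω(γ)| with |Ω(γ)⟩ = cos(π/4-γ/2)|↑↑⟩ + sin(π/4-γ/2)|↓↓⟩, the minimum error rate satisfies δ_min(Ω) = sin²(γ/2). -/
open Matrix Kronecker Complex

noncomputable section

abbrev M2 := Matrix (Fin 2) (Fin 2) ℂ
abbrev M4 := Matrix (Fin 2 × Fin 2) (Fin 2 × Fin 2) ℂ

/-- Pauli matrices -/
def σ1 : M2 := !![0, 1; 1, 0]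
def σ2 : M2 := !![0, -Complex.I; Complex.I, 0]
def σ3 : M2 := !![1, 0; 0, -1]
def σ : Fin 3 → M2 := ![σ1, σ2, σ3]

/-- computational basis kets of one qubit -/
def up : Fin 2 → ℂ := ![1, 0]
def dn : Fin 2 → ℂ := ![0, 1]

/-- the pure state |Ω(γ)⟩ = cos(π/4-γ/2)|↑↑⟩ + sin(π/4-γ/2)|↓↓⟩ as a vector -/
def Ωvec (γ : ℝ) : Fin 2 × Fin 2 → ℂ := fun p =>
  (Real.cos (Real.pi/4 - γ/2) : ℂ) * (up p.1 * up p.2)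
  + (Real.sin (Real.pi/4 - γ/2) : ℂ) * (dn p.1 * dn p.2)

/-- the rank-one projector |v⟩⟨v| -/
def proj (v : Fin 2 × Fin 2 → ℂ) : M4 :=
  Matrix.vecMulVec v (fun p => (starRingEnd ℂ) (v p))

/-- the density operator of |Ω(γ)⟩ -/
def Ωstate (γ : ℝ) : M4 := proj (Ωvec γ)

/-- the Bell states -/
def Φp : Fin 2 × Fin 2 → ℂ := fun p => ((up p.1 * up p.2) + (dn p.1 * dn p.2)) / (Real.sqrt 2 : ℂ)
def Φm : Fin 2 × Fin 2 → ℂ := fun p => ((up p.1 * up p.2) - (dn p.1 * dn p.2)) / (Real.sqrt 2 : ℂ)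
def Ψp : Fin 2 × Fin 2 → ℂ := fun p => ((up p.1 * dn p.2) + (dn p.1 * up p.2)) / (Real.sqrt 2 : ℂ)
def Ψm : Fin 2 × Fin 2 → ℂ := fun p => ((up p.1 * dn p.2) - (dn p.1 * up p.2)) / (Real.sqrt 2 : ℂ)

/-- the Werner state in Bloch form -/
def ρW (F : ℝ) : M4 :=
  (1/4 : ℂ) • ((1 : M4) + (((4*F-1)/3 : ℝ) : ℂ) • (σ1 ⊗ₖ σ1 - σ2 ⊗ₖ σ2 + σ3 ⊗ₖ σ3))

/-- σ·n for a direction n ∈ ℝ³ -/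
def pdot (n : Fin 3 → ℝ) : M2 := ∑ i, ((n i : ℂ)) • σ i

/-- correlation function ⟨A ⊗ B⟩ in the state ρ -/
def corr (ρ : M4) (A B : M2) : ℝ := (Matrix.trace (ρ * (A ⊗ₖ B))).re

/-- squared Hilbert-Schmidt norm -/
def hs2 (A : M4) : ℝ := (Matrix.trace (A * Aᴴ)).re

/-- the post-measurement (classical-quantum) state after a projective
measurement {P, 1-P} on the first qubit -/
def postMeas (P : M2) (ρ : M4) : M4 :=
  (P ⊗ₖ (1 : M2)) * ρ * (P ⊗ₖ (1 : M2))
  + (((1 : M2) - P) ⊗ₖ (1 : M2)) * ρ * (((1 : M2) - P) ⊗ₖ (1 : M2))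

/-- geometric discord: minimal squared Hilbert-Schmidt distance of ρ to the
classical-quantum states obtained by rank-one projective measurements on qubit 1 -/
def Dg (ρ : M4) : ℝ :=
  sInf {r : ℝ | ∃ P : M2, P.IsHermitian ∧ P * P = P ∧ P.trace = 1 ∧
    r = hs2 (ρ - postMeas P ρ)}

/-- minimal error rate of the key in the general EPR protocol -/
def δmin (ρ : M4) : ℝ :=
  1/2 - (1/4) * (sSup {r : ℝ | ∃ n : Fin 3 → ℝ, (∑ i, n i ^ 2) = 1 ∧ r = corr ρ σ1 (pdot n)}
    + sSup {r : ℝ | ∃ n : Fin 3 → ℝ, (∑ i, n i ^ 2) = 1 ∧ r = corr ρ σ2 (pdot n)})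

lemma corr_s1 (γ : ℝ) (n : Fin 3 → ℝ) :
    corr (Ωstate γ) σ1 (pdot n) = n 0 * Real.cos γ := by
  simp only [corr, Ωstate, proj, Ωvec, pdot, σ, σ1, σ2, σ3, up, dn, Matrix.trace,
    Matrix.diag, Matrix.mul_apply, Matrix.kroneckerMap_apply, Matrix.vecMulVec_apply,
    Fintype.sum_prod_type, Fin.sum_univ_succ, Fin.sum_univ_zero,
    Matrix.sum_apply, Matrix.smul_apply, Matrix.cons_val_zero, Matrix.cons_val_one,
    Matrix.head_cons, Matrix.cons_val', Matrix.empty_val', Matrix.cons_val_fin_one,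
    Matrix.head_fin_const, Matrix.of_apply]
  simp [Complex.ext_iff, -Complex.ofReal_cos, -Complex.ofReal_sin]
  have h : Real.cos (Real.pi/4 - γ/2) * Real.sin (Real.pi/4 - γ/2) * 2 = Real.cos γ := by
    have h2 := Real.sin_two_mul (Real.pi/4 - γ/2)
    rw [show 2*(Real.pi/4 - γ/2) = Real.pi/2 - γ by ring, Real.sin_pi_div_two_sub] at h2
    linarith
  linear_combination (n 0) * h

lemma corr_s2 (γ : ℝ) (n : Fin 3 → ℝ) :
    corr (Ωstate γ) σ2 (pdot n) = -(n 1) * Real.cos γ := by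
  simp only [corr, Ωstate, proj, Ωvec, pdot, σ, σ1, σ2, σ3, up, dn, Matrix.trace,
    Matrix.diag, Matrix.mul_apply, Matrix.kroneckerMap_apply, Matrix.vecMulVec_apply,
    Fintype.sum_prod_type, Fin.sum_univ_succ, Fin.sum_univ_zero,
    Matrix.sum_apply, Matrix.smul_apply, Matrix.cons_val_zero, Matrix.cons_val_one,
    Matrix.head_cons, Matrix.cons_val', Matrix.empty_val', Matrix.cons_val_fin_one,
    Matrix.head_fin_const, Matrix.of_apply]
  simp [Complex.ext_iff, -Complex.ofReal_cos, -Complex.ofReal_sin]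
  have h : Real.cos (Real.pi/4 - γ/2) * Real.sin (Real.pi/4 - γ/2) * 2 = Real.cos γ := by
    have h2 := Real.sin_two_mul (Real.pi/4 - γ/2)
    rw [show 2*(Real.pi/4 - γ/2) = Real.pi/2 - γ by ring, Real.sin_pi_div_two_sub] at h2
    linarith
  linear_combination (-(n 1)) * h

theorem error_rate_pure' (γ : ℝ) (hγ : 0 ≤ γ) (hγ' : γ ≤ Real.pi/2) :
    δmin (Ωstate γ) = (Real.sin (γ/2))^2 := by
  have hc : 0 ≤ Real.cos γ := by
    apply Real.cos_nonneg_of_mem_Icc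
    constructor
    · have := Real.pi_pos; linarith
    · exact hγ'
  have key : ∀ (f : (Fin 3 → ℝ) → ℝ) (m : Fin 3 → ℝ), (∑ i, m i ^ 2) = 1 →
      f m = Real.cos γ → (∀ n : Fin 3 → ℝ, (∑ i, n i ^ 2) = 1 → f n ≤ Real.cos γ) →
      sSup {r : ℝ | ∃ n : Fin 3 → ℝ, (∑ i, n i ^ 2) = 1 ∧ r = f n} = Real.cos γ := by
    intro f m hm hfm hub
    apply le_antisymm
    · refine csSup_le ⟨f m, m, hm, rfl⟩ ?_
      rintro r ⟨n, hn, rfl⟩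
      exact hub n hn
    · apply le_csSup
      · exact ⟨Real.cos γ, by rintro r ⟨n, hn, rfl⟩; exact hub n hn⟩
      · exact ⟨m, hm, hfm.symm⟩
  have h1 : sSup {r : ℝ | ∃ n : Fin 3 → ℝ, (∑ i, n i ^ 2) = 1 ∧ r = corr (Ωstate γ) σ1 (pdot n)}
      = Real.cos γ := by
    apply key _ ![1, 0, 0]
    · simp [Fin.sum_univ_three]
    · rw [corr_s1]; simp
    · intro n hn
      rw [corr_s1]
      have h0 : n 0 ≤ 1 := by
        rw [Fin.sum_univ_three] at hn
        nlinarith [sq_nonneg (n 0 - 1), sq_nonneg (n 1), sq_nonneg (n 2)]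
      nlinarith
  have h2 : sSup {r : ℝ | ∃ n : Fin 3 → ℝ, (∑ i, n i ^ 2) = 1 ∧ r = corr (Ωstate γ) σ2 (pdot n)}
      = Real.cos γ := by
    apply key _ ![0, -1, 0]
    · simp [Fin.sum_univ_three]
    · rw [corr_s2]; simp
    · intro n hn
      rw [corr_s2]
      have h0 : -(n 1) ≤ 1 := by
        rw [Fin.sum_univ_three] at hn
        nlinarith [sq_nonneg (n 1 + 1), sq_nonneg (n 0), sq_nonneg (n 2)]
      nlinarith
  rw [δmin, h1, h2]
  have hcg : Real.cos γ = 1 - 2 * Real.sin (γ/2) ^ 2 := by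
    have := Real.cos_two_mul (γ/2)
    have hs := Real.sin_sq_add_cos_sq (γ/2)
    rw [show 2 * (γ/2) = γ by ring] at this
    linarith
  rw [hcg]; ring

/-- minimal error rate of the pure state Ω(γ) is sin²(γ/2). -/
theorem error_rate_pure (γ : ℝ) (hγ : 0 ≤ γ) (hγ' : γ ≤ Real.pi/2) :
    δmin (Ωstate γ) = (Real.sin (γ/2))^2 :=
  error_rate_pure' γ hγ hγ'
end
end

section
/- For both the pure state Ω(γ) and the Werner state ρ_W(F) (F ≥ 1/4), the minimum error rate satisfies δ_min = (1 − √(2 D_g))/2, where D_g is the geometric discord of the respective state. -/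
open Matrix Kronecker Complex

noncomputable section

/-!
For a pure state `ρ = |v⟩⟨v|` and a Hermitian projector `Q`, splitting `v = Qv + (1 - Q)v`
shows that `ρ` minus its dephasing `QρQ + (1 - Q)ρ(1 - Q)` is the off-diagonal part
`|Qv⟩⟨(1 - Q)v| + |(1 - Q)v⟩⟨Qv|`, whose squared Hilbert–Schmidt norm is
`2 ‖Qv‖² ‖(1 - Q)v‖²`. For `Ω(γ)` and `Q = P ⊗ 1`, where `P` has diagonal `(p, 1 - p)`, this is
`cos² γ / 2 + 2 p (1 - p) sin² γ`, minimal at `p = 1`. The Werner state is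
`(1 - t)/4 · 1 + t Ω(0)` with `t = (4F - 1)/3`: the identity part is fixed by every measurement
and carries no `σ₁`, `σ₂` correlations, so all quantities scale with `t`.

In both cases `⟨σ₁ ⊗ σ·n⟩ = a n₁` and `⟨σ₂ ⊗ σ·n⟩ = -a n₂` (with `a = cos γ`, resp. `a = t`),
whose maxima over unit vectors are `|a|`, while `D_g = a² / 2`; hence
`δ_min = (1 - |a|)/2 = (1 - √(2 D_g))/2`.
-/

section Dephasing

variable {ι : Type*} [Fintype ι]

def dephase [DecidableEq ι] (Q ρ : Matrix ι ι ℂ) : Matrix ι ι ℂ :=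
  Q * ρ * Q + (1 - Q) * ρ * (1 - Q)

lemma conj_vecMulVec_star (Q : Matrix ι ι ℂ) (hQ : Q.IsHermitian) (v : ι → ℂ) :
    Q * vecMulVec v (star v) * Q = vecMulVec (Q *ᵥ v) (star (Q *ᵥ v)) := by
  rw [mul_vecMulVec, vecMulVec_mul, star_mulVec, hQ.eq]

lemma vecMulVec_star_sub_dephase [DecidableEq ι] (Q : Matrix ι ι ℂ) (hQ : Q.IsHermitian)
    (v : ι → ℂ) :
    vecMulVec v (star v) - dephase Q (vecMulVec v (star v))
      = vecMulVec (Q *ᵥ v) (star ((1 - Q) *ᵥ v)) + vecMulVec ((1 - Q) *ᵥ v) (star (Q *ᵥ v)) := by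
  have hv : Q *ᵥ v + (1 - Q) *ᵥ v = v := by rw [← add_mulVec, add_sub_cancel, one_mulVec]
  rw [dephase, conj_vecMulVec_star Q hQ, conj_vecMulVec_star _ (isHermitian_one.sub hQ)]
  rw [show vecMulVec v (star v) = vecMulVec (Q *ᵥ v + (1 - Q) *ᵥ v) (star (Q *ᵥ v + (1 - Q) *ᵥ v))
    by rw [hv]]
  simp only [star_add, add_vecMulVec, vecMulVec_add]
  abel

lemma star_mulVec_dotProduct_mulVec_self (Q : Matrix ι ι ℂ) (hQ : Q.IsHermitian)
    (hQQ : IsIdempotentElem Q) (v : ι → ℂ) :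
    star (Q *ᵥ v) ⬝ᵥ (Q *ᵥ v) = star v ⬝ᵥ (Q *ᵥ v) := by
  rw [star_mulVec, ← dotProduct_mulVec, mulVec_mulVec, hQ.eq, hQQ.eq]

lemma star_mulVec_dotProduct_one_sub_mulVec [DecidableEq ι] (Q : Matrix ι ι ℂ)
    (hQ : Q.IsHermitian) (hQQ : IsIdempotentElem Q) (v : ι → ℂ) :
    star (Q *ᵥ v) ⬝ᵥ ((1 - Q) *ᵥ v) = 0 := by
  rw [star_mulVec, ← dotProduct_mulVec, mulVec_mulVec, hQ.eq, mul_sub, mul_one, hQQ.eq, sub_self,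
    zero_mulVec, dotProduct_zero]

lemma trace_mul_conjTranspose_vecMulVec_add_of_orthogonal {a b : ι → ℂ}
    (hab : star a ⬝ᵥ b = 0) :
    trace ((vecMulVec a (star b) + vecMulVec b (star a))
      * (vecMulVec a (star b) + vecMulVec b (star a))ᴴ)
      = 2 * ((star a ⬝ᵥ a) * (star b ⬝ᵥ b)) := by
  have hba : star b ⬝ᵥ a = 0 := by rw [star_dotProduct, hab, star_zero]
  simp only [conjTranspose_add, conjTranspose_vecMulVec, star_star, add_mul, mul_add,
    vecMulVec_mul_vecMulVec, trace_add, trace_vecMulVec, hab, hba, zero_smul, dotProduct_zero,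
    dotProduct_smul, smul_eq_mul, dotProduct_comm a (star a), dotProduct_comm b (star b)]
  ring

lemma trace_sub_dephase_mul_conjTranspose [DecidableEq ι] (Q : Matrix ι ι ℂ)
    (hQ : Q.IsHermitian) (hQQ : IsIdempotentElem Q) (v : ι → ℂ) :
    trace ((vecMulVec v (star v) - dephase Q (vecMulVec v (star v)))
      * (vecMulVec v (star v) - dephase Q (vecMulVec v (star v)))ᴴ)
      = 2 * ((star v ⬝ᵥ (Q *ᵥ v)) * (star v ⬝ᵥ ((1 - Q) *ᵥ v))) := by
  rw [vecMulVec_star_sub_dephase Q hQ,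
    trace_mul_conjTranspose_vecMulVec_add_of_orthogonal
      (star_mulVec_dotProduct_one_sub_mulVec Q hQ hQQ v),
    star_mulVec_dotProduct_mulVec_self Q hQ hQQ,
    star_mulVec_dotProduct_mulVec_self _ (isHermitian_one.sub hQ) hQQ.one_sub]

lemma dephase_add_smul [DecidableEq ι] (Q : Matrix ι ι ℂ) (u w : ℂ) (A B : Matrix ι ι ℂ) :
    dephase Q (u • A + w • B) = u • dephase Q A + w • dephase Q B := by
  simp only [dephase, Matrix.mul_add, Matrix.add_mul, Matrix.mul_smul, Matrix.smul_mul, smul_add]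
  abel

lemma dephase_one [DecidableEq ι] (Q : Matrix ι ι ℂ) (hQQ : IsIdempotentElem Q) :
    dephase Q 1 = 1 := by
  rw [dephase, Matrix.mul_one, Matrix.mul_one, hQQ.eq, hQQ.one_sub.eq, add_sub_cancel]

open scoped ComplexOrder in
lemma re_apply_self_nonneg_of_isIdempotentElem {P : Matrix ι ι ℂ} (hH : P.IsHermitian)
    (hid : IsIdempotentElem P) (i : ι) : 0 ≤ (P i i).re := by
  have hpsd : P.PosSemidef := by
    simpa only [hH.eq, hid.eq] using posSemidef_conjTranspose_mul_self P
  exact (Complex.le_def.mp hpsd.diag_nonneg).1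

end Dephasing

lemma sSup_mul_apply_unit_eq_abs {ι : Type*} [Fintype ι] [DecidableEq ι]
    (g : (ι → ℝ) → ℝ) (a : ℝ) (i : ι) (hg : ∀ n, g n = a * n i) :
    sSup {r : ℝ | ∃ n : ι → ℝ, (∑ j, n j ^ 2) = 1 ∧ r = g n} = |a| := by
  refine IsGreatest.csSup_eq ⟨⟨Pi.single i (if 0 ≤ a then 1 else -1), ?_, ?_⟩, ?_⟩
  · rw [Finset.sum_eq_single_of_mem i (Finset.mem_univ i) fun j _ hj => by simp [hj]]
    split_ifs <;> simp
  · rw [hg, Pi.single_eq_same]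
    split_ifs with ha
    · rw [abs_of_nonneg ha, mul_one]
    · rw [abs_of_neg (not_le.mp ha), mul_neg_one]
  · rintro r ⟨n, hn, rfl⟩
    have hi : n i ^ 2 ≤ 1 :=
      hn ▸ Finset.single_le_sum (fun j _ => sq_nonneg (n j)) (Finset.mem_univ i)
    rw [hg]
    calc a * n i ≤ |a| * |n i| := by rw [← abs_mul]; exact le_abs_self _
      _ ≤ |a| * 1 := by gcongr; exact abs_le_one_iff_mul_self_le_one.mpr (by nlinarith)
      _ = |a| := mul_one _

lemma proj_eq_vecMulVec_star (v : Fin 2 × Fin 2 → ℂ) : proj v = vecMulVec v (star v) := rfl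

lemma one_sub_kronecker_one (P : M2) : ((1 : M2) - P) ⊗ₖ (1 : M2) = 1 - P ⊗ₖ 1 := by
  rw [eq_sub_iff_add_eq, ← add_kronecker, sub_add_cancel, one_kronecker_one]

lemma postMeas_eq_dephase (P : M2) (ρ : M4) : postMeas P ρ = dephase (P ⊗ₖ (1 : M2)) ρ := by
  rw [postMeas, dephase, one_sub_kronecker_one]

lemma Matrix.IsHermitian.kronecker_one {P : M2} (hP : P.IsHermitian) :
    (P ⊗ₖ (1 : M2)).IsHermitian := by
  rw [IsHermitian, conjTranspose_kronecker, hP.eq, conjTranspose_one]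

lemma IsIdempotentElem.kronecker_one {P : M2} (hP : IsIdempotentElem P) :
    IsIdempotentElem (P ⊗ₖ (1 : M2)) := by
  rw [IsIdempotentElem, ← mul_kronecker_mul, hP.eq, Matrix.mul_one]

lemma hs2_smul (t : ℝ) (A : M4) : hs2 ((t : ℂ) • A) = t ^ 2 * hs2 A := by
  rw [hs2, hs2, conjTranspose_smul, Matrix.smul_mul, Matrix.mul_smul, trace_smul, trace_smul,
    smul_smul, Complex.star_def, Complex.conj_ofReal, smul_eq_mul, ← Complex.ofReal_mul,
    Complex.re_ofReal_mul, sq]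

lemma corr_vecMulVec_star (v : Fin 2 × Fin 2 → ℂ) (A B : M2) :
    corr (vecMulVec v (star v)) A B = (star v ⬝ᵥ ((A ⊗ₖ B) *ᵥ v)).re := by
  rw [corr, vecMulVec_mul, trace_vecMulVec, dotProduct_comm, dotProduct_mulVec]

lemma corr_smul_add_smul (u w : ℝ) (ρ₁ ρ₂ : M4) (A B : M2) :
    corr ((u : ℂ) • ρ₁ + (w : ℂ) • ρ₂) A B = u * corr ρ₁ A B + w * corr ρ₂ A B := by
  simp only [corr, Matrix.add_mul, Matrix.smul_mul, trace_add, trace_smul, smul_eq_mul,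
    Complex.add_re, Complex.re_ofReal_mul]

lemma corr_one (A B : M2) : corr 1 A B = (trace A * trace B).re := by
  rw [corr, Matrix.one_mul, trace_kronecker]

lemma trace_σ1 : trace σ1 = 0 := by simp [σ1, trace_fin_two]

lemma trace_σ2 : trace σ2 = 0 := by simp [σ2, trace_fin_two]

lemma cos_eq_two_mul_sin_mul_cos_quarter (γ : ℝ) :
    Real.cos γ = 2 * Real.sin (Real.pi/4 - γ/2) * Real.cos (Real.pi/4 - γ/2) := by
  rw [← Real.sin_two_mul, show 2 * (Real.pi/4 - γ/2) = Real.pi/2 - γ by ring,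
    Real.sin_pi_div_two_sub]

lemma sin_eq_cos_sq_sub_sin_sq_quarter (γ : ℝ) :
    Real.sin γ = Real.cos (Real.pi/4 - γ/2) ^ 2 - Real.sin (Real.pi/4 - γ/2) ^ 2 := by
  rw [← Real.cos_two_mul', show 2 * (Real.pi/4 - γ/2) = Real.pi/2 - γ by ring,
    Real.cos_pi_div_two_sub]

lemma corr_Ωstate_σ1 (γ : ℝ) (n : Fin 3 → ℝ) :
    corr (Ωstate γ) σ1 (pdot n) = Real.cos γ * n 0 := by
  rw [Ωstate, proj_eq_vecMulVec_star, corr_vecMulVec_star, cos_eq_two_mul_sin_mul_cos_quarter]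
  simp [dotProduct, mulVec, Ωvec, up, dn, pdot, σ, σ1, σ2, σ3, Fintype.sum_prod_type,
    Fin.sum_univ_two, Fin.sum_univ_three, kroneckerMap_apply, Complex.conj_ofReal,
    -Complex.ofReal_cos, -Complex.ofReal_sin]
  ring

lemma corr_Ωstate_σ2 (γ : ℝ) (n : Fin 3 → ℝ) :
    corr (Ωstate γ) σ2 (pdot n) = -Real.cos γ * n 1 := by
  rw [Ωstate, proj_eq_vecMulVec_star, corr_vecMulVec_star, cos_eq_two_mul_sin_mul_cos_quarter]
  simp [dotProduct, mulVec, Ωvec, up, dn, pdot, σ, σ1, σ2, σ3, Fintype.sum_prod_type,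
    Fin.sum_univ_two, Fin.sum_univ_three, kroneckerMap_apply, Complex.conj_ofReal,
    -Complex.ofReal_cos, -Complex.ofReal_sin]
  ring

lemma star_Ωvec_dotProduct_kronecker_one_mulVec (γ : ℝ) (P : M2) :
    star (Ωvec γ) ⬝ᵥ ((P ⊗ₖ (1 : M2)) *ᵥ Ωvec γ)
      = (Real.cos (Real.pi/4 - γ/2) : ℂ) ^ 2 * P 0 0
        + (Real.sin (Real.pi/4 - γ/2) : ℂ) ^ 2 * P 1 1 := by
  simp [dotProduct, mulVec, Ωvec, up, dn, Fintype.sum_prod_type, Fin.sum_univ_two,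
    kroneckerMap_apply, Complex.conj_ofReal, -Complex.ofReal_cos, -Complex.ofReal_sin]
  ring

lemma hs2_Ωstate_sub_postMeas (γ : ℝ) (P : M2) (hH : P.IsHermitian) (hid : P * P = P)
    (htr : P.trace = 1) :
    hs2 (Ωstate γ - postMeas P (Ωstate γ))
      = Real.cos γ ^ 2 / 2 + 2 * (P 0 0).re * (P 1 1).re * Real.sin γ ^ 2 := by
  obtain ⟨x, hx⟩ : ∃ x : ℝ, P 0 0 = x := ⟨_, (hH.coe_re_apply_self 0).symm⟩
  obtain ⟨y, hy⟩ : ∃ y : ℝ, P 1 1 = y := ⟨_, (hH.coe_re_apply_self 1).symm⟩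
  rw [trace_fin_two, hx, hy] at htr
  have hsum : x + y = 1 := by exact_mod_cast htr
  have h1P : ((1 : M2) - P) 0 0 = y ∧ ((1 : M2) - P) 1 1 = x := by
    constructor <;> simp [hx, hy] <;> linear_combination -htr
  rw [hs2, postMeas_eq_dephase, Ωstate, proj_eq_vecMulVec_star,
    trace_sub_dephase_mul_conjTranspose _ hH.kronecker_one (IsIdempotentElem.kronecker_one hid),
    ← one_sub_kronecker_one, star_Ωvec_dotProduct_kronecker_one_mulVec,
    star_Ωvec_dotProduct_kronecker_one_mulVec, h1P.1, h1P.2, hx, hy,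
    cos_eq_two_mul_sin_mul_cos_quarter γ, sin_eq_cos_sq_sub_sin_sq_quarter γ]
  norm_cast
  linear_combination (2 * Real.cos (Real.pi/4 - γ/2) ^ 2 * Real.sin (Real.pi/4 - γ/2) ^ 2
    * (x + y + 1)) * hsum

lemma Ωvec_zero :
    Ωvec 0 = fun p => ((Real.sqrt 2 / 2 : ℝ) : ℂ) * (up p.1 * up p.2 + dn p.1 * dn p.2) := by
  funext p
  rw [Ωvec, zero_div, sub_zero, Real.cos_pi_div_four, Real.sin_pi_div_four, mul_add]

lemma Ωstate_zero_eq_bloch :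
    Ωstate 0 = (1/4 : ℂ) • ((1 : M4) + (σ1 ⊗ₖ σ1 - σ2 ⊗ₖ σ2 + σ3 ⊗ₖ σ3)) := by
  have h2 : ((Real.sqrt 2 : ℝ) : ℂ) * (Real.sqrt 2 : ℝ) = 2 := by
    exact_mod_cast Real.mul_self_sqrt zero_le_two
  ext ⟨i, j⟩ ⟨k, l⟩
  rw [Ωstate, proj_eq_vecMulVec_star, vecMulVec_apply, Ωvec_zero]
  fin_cases i <;> fin_cases j <;> fin_cases k <;> fin_cases l <;>
    simp [up, dn, σ1, σ2, σ3, kroneckerMap_apply, one_apply, Complex.conj_ofReal] <;>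
    linear_combination h2 / 4

lemma ρW_eq (F : ℝ) :
    ρW F = (((1 - (4*F-1)/3) / 4 : ℝ) : ℂ) • (1 : M4) + (((4*F-1)/3 : ℝ) : ℂ) • Ωstate 0 := by
  rw [ρW, Ωstate_zero_eq_bloch]
  push_cast
  module

lemma ρW_sub_postMeas (F : ℝ) (P : M2) (hid : P * P = P) :
    ρW F - postMeas P (ρW F)
      = (((4*F-1)/3 : ℝ) : ℂ) • (Ωstate 0 - postMeas P (Ωstate 0)) := by
  rw [postMeas_eq_dephase, postMeas_eq_dephase, ρW_eq, dephase_add_smul,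
    dephase_one _ (IsIdempotentElem.kronecker_one hid), smul_sub]
  abel

lemma corr_ρW_σ1 (F : ℝ) (n : Fin 3 → ℝ) : corr (ρW F) σ1 (pdot n) = (4*F-1)/3 * n 0 := by
  rw [ρW_eq, corr_smul_add_smul, corr_one, trace_σ1, corr_Ωstate_σ1, Real.cos_zero]
  simp

lemma corr_ρW_σ2 (F : ℝ) (n : Fin 3 → ℝ) : corr (ρW F) σ2 (pdot n) = -((4*F-1)/3) * n 1 := by
  rw [ρW_eq, corr_smul_add_smul, corr_one, trace_σ2, corr_Ωstate_σ2, Real.cos_zero]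
  simp

def projUp : M2 := !![1, 0; 0, 0]

lemma projUp_isHermitian : projUp.IsHermitian := by
  ext i j; fin_cases i <;> fin_cases j <;> simp [projUp]

lemma projUp_mul_self : projUp * projUp = projUp := by
  ext i j; fin_cases i <;> fin_cases j <;> simp [projUp]

lemma projUp_trace : projUp.trace = 1 := by simp [projUp, trace_fin_two]

lemma Dg_eq_of_le (ρ : M4) (c : ℝ) (hUp : hs2 (ρ - postMeas projUp ρ) = c)
    (hle : ∀ P : M2, P.IsHermitian → P * P = P → P.trace = 1 → c ≤ hs2 (ρ - postMeas P ρ)) :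
    Dg ρ = c := by
  refine IsLeast.csInf_eq ⟨⟨projUp, projUp_isHermitian, projUp_mul_self, projUp_trace,
    hUp.symm⟩, ?_⟩
  rintro r ⟨P, hH, hid, htr, rfl⟩
  exact hle P hH hid htr

lemma Dg_Ωstate (γ : ℝ) : Dg (Ωstate γ) = Real.cos γ ^ 2 / 2 := by
  refine Dg_eq_of_le _ _ ?_ fun P hH hid htr => ?_
  · rw [hs2_Ωstate_sub_postMeas γ projUp projUp_isHermitian projUp_mul_self projUp_trace]
    simp [projUp]
  · rw [hs2_Ωstate_sub_postMeas γ P hH hid htr]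
    have h0 := re_apply_self_nonneg_of_isIdempotentElem hH hid 0
    have h1 := re_apply_self_nonneg_of_isIdempotentElem hH hid 1
    have := mul_nonneg (mul_nonneg h0 h1) (sq_nonneg (Real.sin γ))
    linarith

lemma Dg_ρW (F : ℝ) : Dg (ρW F) = ((4*F-1)/3) ^ 2 / 2 := by
  have hval : ∀ P : M2, P.IsHermitian → P * P = P → P.trace = 1 →
      hs2 (ρW F - postMeas P (ρW F)) = ((4*F-1)/3) ^ 2 / 2 := by
    intro P hH hid htr
    rw [ρW_sub_postMeas F P hid, hs2_smul, hs2_Ωstate_sub_postMeas 0 P hH hid htr,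
      Real.cos_zero, Real.sin_zero]
    ring
  exact Dg_eq_of_le _ _ (hval projUp projUp_isHermitian projUp_mul_self projUp_trace)
    fun P hH hid htr => (hval P hH hid htr).ge

lemma δmin_eq_of_corr (ρ : M4) (a : ℝ) (h₁ : ∀ n, corr ρ σ1 (pdot n) = a * n 0)
    (h₂ : ∀ n, corr ρ σ2 (pdot n) = -a * n 1) : δmin ρ = (1 - |a|) / 2 := by
  rw [δmin, sSup_mul_apply_unit_eq_abs _ a 0 h₁,
    sSup_mul_apply_unit_eq_abs _ (-a) 1 h₂, abs_neg]
  ring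

lemma δmin_eq_of_corr_of_Dg (ρ : M4) (a : ℝ) (h₁ : ∀ n, corr ρ σ1 (pdot n) = a * n 0)
    (h₂ : ∀ n, corr ρ σ2 (pdot n) = -a * n 1) (hD : Dg ρ = a ^ 2 / 2) :
    δmin ρ = (1 - Real.sqrt (2 * Dg ρ)) / 2 := by
  rw [δmin_eq_of_corr ρ a h₁ h₂, hD, mul_div_cancel₀ _ two_ne_zero, Real.sqrt_sq_eq_abs]

theorem error_rate_discord_relation_general (γ F : ℝ) :
    δmin (Ωstate γ) = (1 - Real.sqrt (2 * Dg (Ωstate γ)))/2 ∧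
    δmin (ρW F) = (1 - Real.sqrt (2 * Dg (ρW F)))/2 :=
  ⟨δmin_eq_of_corr_of_Dg _ _ (corr_Ωstate_σ1 γ) (corr_Ωstate_σ2 γ) (Dg_Ωstate γ),
    δmin_eq_of_corr_of_Dg _ _ (corr_ρW_σ1 F) (corr_ρW_σ2 F) (Dg_ρW F)⟩

/-- δ_min = (1 − √(2 D_g))/2 for both the pure state and the Werner state. -/
theorem error_rate_discord_relation (γ F : ℝ) (hγ : 0 ≤ γ) (hγ' : γ ≤ Real.pi/2)
    (hF : 1/4 ≤ F) (hF1 : F ≤ 1) :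
    δmin (Ωstate γ) = (1 - Real.sqrt (2 * Dg (Ωstate γ)))/2 ∧
    δmin (ρW F) = (1 - Real.sqrt (2 * Dg (ρW F)))/2 :=
  error_rate_discord_relation_general γ F
end
end
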